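/- arXiv:1502.06262 — 2 statements merged into one kernel-verified Lean document; each statement's English description precedes it below -/
import Mathlib

section
/- Let Λ ⊆ Σ_A and Γ ⊆ Σ_B be Ott-Tomforde-Willis shift spaces and Φ : Λ → Γ a map with Φ(Ø) = Ø such that Φ^{-1}(Ø) is a finitely defined set. Then Φ is continuous and shift-commuting if and only if Φ is a sliding block code (Φ(x))_n = Σ_{a∈L_Γ∪{õ}} a·1_{C_a}(σ^{n−1}(x)) in which, for all a ∈ L_Γ, the set C_a is a finite (possibly empty) union of generalized cylinders of Λ. -/
/-!
The full shift is compact: an ultrafilter converges to the sequence of letters on which it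
concentrates, cut off at the first position where it concentrates on no single letter.

If `Φ` is continuous and commutes with `σ`, then `(Φ x)ₙ = (Φ (σⁿ x))₀`, so `Φ` is the sliding
block code of the classes `C_a = {x ∈ Λ | (Φ x)₀ = a}`. For a letter `b`, `C_b` is relatively
open and closed in the closed set `Λ`, hence compact, hence covered by finitely many cylinders
inside the open set that cuts it out.

Conversely, cylinders are clopen and `σⁿ` is continuous at every point whose first `n` entries
are letters (the shift is discontinuous only at `Ø`). Since `(Φ x)ₙ = b` means `σⁿ x ∈ C_b`, this
condition is locally constant near such points. A cylinder around `Φ y` constrains the entries of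
`Φ y` only up to a position before which they are letters, and `Φ(Ø) = Ø` makes the
corresponding entries of `y` letters too.
-/

namespace OTW

/-- The Ott-Tomforde-Willis full shift `Σ_A`: sequences over `A ∪ {õ}` (with `õ = none`)
such that once the empty letter `õ` appears, it repeats forever. -/
@[ext]
structure FullShift (A : Type*) where
  val : ℕ → Option A
  tail : ∀ i, val i = none → val (i + 1) = none

variable {A B : Type*}

/-- The shift map `σ`. -/
def shiftMap (x : FullShift A) : FullShift A :=
  ⟨fun i => x.val (i + 1), fun i hi => x.tail (i + 1) hi⟩

/-- The empty sequence `Ø`. -/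
def emptySeq : FullShift A :=
  ⟨fun _ => none, fun _ _ => rfl⟩

theorem val_none_mono (x : FullShift A) :
    ∀ {k m : ℕ}, k ≤ m → x.val k = none → x.val m = none := by
  intro k m h hk
  induction m, h using Nat.le_induction with
  | base => exact hk
  | succ m hm ih => exact x.tail m ih

/-- The finite sequence determined by a word `w : List A`. -/
def finSeq (w : List A) : FullShift A where
  val i := (w.drop i).head?
  tail := by
    intro i hi
    rw [List.head?_eq_none_iff] at hi ⊢
    rw [List.drop_eq_nil_iff] at hi ⊢
    omega

/-- Generalized cylinder `Z(w, F)`. -/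
def Zcyl (w : List A) (F : Finset A) : Set (FullShift A) :=
  {x | (∀ i : Fin w.length, x.val i = some (w.get i)) ∧ ∀ a ∈ F, x.val w.length ≠ some a}

/-- The topology on `Σ_A` generated by the generalized cylinders. -/
instance : TopologicalSpace (FullShift A) :=
  TopologicalSpace.generateFrom {S | ∃ (w : List A) (F : Finset A), S = Zcyl w F}

/-- The letters `L_Λ` used by sequences of `Λ`. -/
def letters (Λ : Set (FullShift A)) : Set A :=
  {a | ∃ x ∈ Λ, ∃ i, x.val i = some a}

/-- `w` is a (fully lettered) block appearing in some sequence of `Λ`. -/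
def IsBlock (Λ : Set (FullShift A)) (w : List A) : Prop :=
  ∃ x ∈ Λ, ∃ n, ∀ i : Fin w.length, x.val (n + i) = some (w.get i)

/-- Ott-Tomforde-Willis shift space: closed, shift invariant, with the
infinite extension property. -/
def IsShiftSpace (Λ : Set (FullShift A)) : Prop :=
  IsClosed Λ ∧ (∀ x ∈ Λ, shiftMap x ∈ Λ) ∧
    (emptySeq ∈ Λ ↔ (letters Λ).Infinite) ∧
    (∀ w : List A, w ≠ [] → (finSeq w ∈ Λ ↔ {b : A | IsBlock Λ (w ++ [b])}.Infinite))

/-- `x` begins with the block `b` (a word over the extended alphabet `A ∪ {õ}`). -/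
def Prefixed (x : FullShift A) (b : List (Option A)) : Prop :=
  ∀ i : Fin b.length, x.val i = b.get i

/-- `(P, Q)` is a representation of `C` as a finitely defined set in `Λ`:
membership in `C` is witnessed by an initial block in `P`, and membership in the
complement by an initial block in `Q`. -/
def FDRep (Λ C : Set (FullShift A)) (P Q : Set (List (Option A))) : Prop :=
  (∀ b ∈ P, b ≠ []) ∧ (∀ b ∈ Q, b ≠ []) ∧
    C = {x ∈ Λ | ∃ b ∈ P, Prefixed x b} ∧
    Λ \ C = {x ∈ Λ | ∃ b ∈ Q, Prefixed x b}

/-- `C` is a finitely defined set in `Λ`. -/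
def FinitelyDefinedIn (Λ C : Set (FullShift A)) : Prop :=
  ∃ P Q, FDRep Λ C P Q

/-- `S` is a finite (possibly empty) union of generalized cylinders of `Λ`. -/
def IsFinUnionCyl (Λ S : Set (FullShift A)) : Prop :=
  ∃ (n : ℕ) (w : Fin n → List A) (F : Fin n → Finset A),
    S = Λ ∩ ⋃ i, Zcyl (w i) (F i)

/-- `Φ` is the sliding block code determined by the partition `{C_a}` of `Λ` into
finitely defined sets, with `C_õ` shift invariant. -/
def IsSBCWith (Λ : Set (FullShift A)) (Φ : FullShift A → FullShift B)
    (C : Option B → Set (FullShift A)) : Prop :=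
  (∀ a, C a ⊆ Λ) ∧ (∀ x ∈ Λ, ∃! a, x ∈ C a) ∧
    (∀ a, FinitelyDefinedIn Λ (C a)) ∧
    (∀ x ∈ C none, shiftMap x ∈ C none) ∧
    (∀ x ∈ Λ, ∀ n : ℕ, shiftMap^[n] x ∈ C ((Φ x).val n))

/-- Sliding block code. -/
def IsSlidingBlockCode (Λ : Set (FullShift A)) (Φ : FullShift A → FullShift B) : Prop :=
  ∃ C, IsSBCWith Λ Φ C

/-- Row-finite shift: every letter has a finite follower set. -/
def RowFinite (Λ : Set (FullShift A)) : Prop :=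
  ∀ a ∈ letters Λ, {b : A | IsBlock Λ [a, b]}.Finite

/-- The `M`-th higher block code `Ξ^(M)`. -/
noncomputable def higherBlock (M : ℕ) (x : FullShift A) : FullShift (Fin M → A) where
  val i := if h : ∀ j : Fin M, (x.val (i + j)).isSome then
      some (fun j => (x.val (i + j)).get (h j)) else none
  tail := by
    intro i hi
    try dsimp only at hi ⊢
    have h1 : ¬ ∀ j : Fin M, (x.val (i + j)).isSome := by
      intro h
      rw [dif_pos h] at hi
      simp at hi
    push_neg at h1
    obtain ⟨j, hj⟩ := h1
    have hjn : x.val (i + j) = none := Option.not_isSome_iff_eq_none.mp hj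
    have hM : (0 : ℕ) < M := j.pos
    rw [dif_neg]
    intro h2
    have hsome := h2 ⟨M - 1, by omega⟩
    have hnone : x.val (i + 1 + ((⟨M - 1, by omega⟩ : Fin M) : ℕ)) = none := by
      apply val_none_mono x ?_ hjn
      have := j.isLt
      simp only [Fin.val_mk]
      omega
    rw [hnone] at hsome
    simp at hsome


open Filter Topology TopologicalSpace

section Cylinders

theorem val_shiftMap_iterate (x : FullShift A) (n i : ℕ) :
    (shiftMap^[n] x).val i = x.val (i + n) := by
  induction n generalizing x with
  | zero => rfl
  | succ n ih => rw [Function.iterate_succ_apply, ih]; rfl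

theorem shiftMap_iterate_eq_emptySeq {x : FullShift A} {n : ℕ} (h : x.val n = none) :
    shiftMap^[n] x = emptySeq :=
  FullShift.ext <| funext fun i => by
    rw [val_shiftMap_iterate]
    exact val_none_mono x (Nat.le_add_left n i) h

theorem eq_emptySeq_of_val_zero {x : FullShift A} (h : x.val 0 = none) : x = emptySeq :=
  shiftMap_iterate_eq_emptySeq h

theorem mem_Zcyl_iff {x : FullShift A} {w : List A} {F : Finset A} :
    x ∈ Zcyl w F ↔
      (∀ i (hi : i < w.length), x.val i = some w[i]) ∧ ∀ a ∈ F, x.val w.length ≠ some a := by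
  simp [Zcyl, Fin.forall_iff]

theorem mem_Zcyl_congr {x z : FullShift A} {w : List A} {F : Finset A}
    (h : ∀ i ≤ w.length, x.val i = z.val i) : x ∈ Zcyl w F ↔ z ∈ Zcyl w F := by
  simp +contextual only [mem_Zcyl_iff, h, le_refl, Nat.le_of_lt]

theorem val_eq_of_mem_Zcyl {x z : FullShift A} {w : List A} {F G : Finset A}
    (hx : x ∈ Zcyl w F) (hz : z ∈ Zcyl w G) {i : ℕ} (hi : i < w.length) :
    x.val i = z.val i := by
  rw [(mem_Zcyl_iff.1 hx).1 i hi, (mem_Zcyl_iff.1 hz).1 i hi]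

theorem Zcyl_subset_of_length_lt {y : FullShift A} {u v : List A} {F G : Finset A}
    (hu : y ∈ Zcyl u F) (hv : y ∈ Zcyl v G) (h : u.length < v.length) :
    Zcyl v G ⊆ Zcyl u F := fun z hz =>
  (mem_Zcyl_congr fun _ hi => val_eq_of_mem_Zcyl hv hz (by omega)).1 hu

theorem eq_of_mem_Zcyl_of_length_eq {y : FullShift A} {u v : List A} {F G : Finset A}
    (hu : y ∈ Zcyl u F) (hv : y ∈ Zcyl v G) (h : u.length = v.length) : u = v :=
  List.ext_getElem h fun i hi hi' => Option.some_injective _ <| by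
    rw [← (mem_Zcyl_iff.1 hu).1 i hi, ← (mem_Zcyl_iff.1 hv).1 i hi']

theorem Zcyl_union [DecidableEq A] (w : List A) (F G : Finset A) :
    Zcyl w (F ∪ G) = Zcyl w F ∩ Zcyl w G := by
  ext x
  simp only [mem_Zcyl_iff, Set.mem_inter_iff, Finset.mem_union]
  grind

theorem exists_Zcyl_subset_inter {y : FullShift A} {u v : List A} {F G : Finset A}
    (hu : y ∈ Zcyl u F) (hv : y ∈ Zcyl v G) :
    ∃ (w : List A) (H : Finset A), y ∈ Zcyl w H ∧ Zcyl w H ⊆ Zcyl u F ∩ Zcyl v G := by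
  classical
  rcases lt_trichotomy u.length v.length with h | h | h
  · exact ⟨v, G, hv, fun z hz => ⟨Zcyl_subset_of_length_lt hu hv h hz, hz⟩⟩
  · obtain rfl := eq_of_mem_Zcyl_of_length_eq hu hv h
    exact ⟨u, F ∪ G, by rw [Zcyl_union]; exact ⟨hu, hv⟩, (Zcyl_union u F G).le⟩
  · exact ⟨u, F, hu, fun z hz => ⟨hz, Zcyl_subset_of_length_lt hv hu h hz⟩⟩

theorem isTopologicalBasis_Zcyl :
    IsTopologicalBasis {S : Set (FullShift A) | ∃ (w : List A) (F : Finset A), S = Zcyl w F} where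
  exists_subset_inter := by
    rintro _ ⟨u, F, rfl⟩ _ ⟨v, G, rfl⟩ y ⟨hu, hv⟩
    obtain ⟨w, H, hy, hsub⟩ := exists_Zcyl_subset_inter hu hv
    exact ⟨_, ⟨w, H, rfl⟩, hy, hsub⟩
  sUnion_eq := Set.eq_univ_of_forall fun x =>
    ⟨Zcyl [] ∅, ⟨[], ∅, rfl⟩, mem_Zcyl_iff.2 ⟨fun _ hi => absurd hi (Nat.not_lt_zero _), by simp⟩⟩
  eq_generateFrom := rfl

theorem isOpen_Zcyl (w : List A) (F : Finset A) : IsOpen (Zcyl w F) :=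
  isTopologicalBasis_Zcyl.isOpen ⟨w, F, rfl⟩

theorem isClosed_Zcyl (w : List A) (F : Finset A) : IsClosed (Zcyl w F) := by
  classical
  refine isOpen_compl_iff.1 <| isOpen_iff_forall_mem_open.2 fun x hx => ?_
  by_cases hpre : ∀ i (hi : i < w.length), x.val i = some w[i]
  · have hF : ¬∀ a ∈ F, x.val w.length ≠ some a := fun hF => hx (mem_Zcyl_iff.2 ⟨hpre, hF⟩)
    push Not at hF
    obtain ⟨a, ha, hxa⟩ := hF
    refine ⟨Zcyl (w ++ [a]) ∅, fun z hz hzw => ?_, isOpen_Zcyl _ _, ?_⟩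
    · have := (mem_Zcyl_iff.1 hz).1 w.length (by simp)
      exact (mem_Zcyl_iff.1 hzw).2 a ha (by simpa using this)
    · refine mem_Zcyl_iff.2 ⟨fun i hi => ?_, by simp⟩
      rcases Nat.lt_or_ge i w.length with h | h
      · simpa [List.getElem_append_left h] using hpre i h
      · obtain rfl : i = w.length := by simp at hi; omega
        simpa using hxa
  · push Not at hpre
    have hmin : ∀ i < Nat.find hpre, ¬∃ hi : i < w.length, x.val i ≠ some w[i] :=
      fun i hi => Nat.find_min hpre hi
    obtain ⟨hj, hxj⟩ := Nat.find_spec hpre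
    generalize Nat.find hpre = j at hmin hj hxj
    refine ⟨Zcyl (w.take j) {w[j]}, fun z hz hzw => ?_, isOpen_Zcyl _ _, ?_⟩
    · have := (mem_Zcyl_iff.1 hz).2 w[j] (Finset.mem_singleton_self _)
      exact this (by simpa [min_eq_left hj.le] using (mem_Zcyl_iff.1 hzw).1 j hj)
    · refine mem_Zcyl_iff.2 ⟨fun i hi => ?_, by simpa [min_eq_left hj.le] using hxj⟩
      rw [List.length_take, lt_min_iff] at hi
      by_contra hne
      exact hmin i hi.1 ⟨hi.2, by simpa using hne⟩

theorem isClopen_Zcyl (w : List A) (F : Finset A) : IsClopen (Zcyl w F) :=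
  ⟨isClosed_Zcyl w F, isOpen_Zcyl w F⟩

theorem mem_Zcyl_append {z : FullShift A} {p w : List A} {F : Finset A} :
    z ∈ Zcyl (p ++ w) F ↔ z ∈ Zcyl p ∅ ∧ shiftMap^[p.length] z ∈ Zcyl w F := by
  simp only [mem_Zcyl_iff, val_shiftMap_iterate, List.length_append, Finset.notMem_empty,
    IsEmpty.forall_iff, implies_true, and_true]
  constructor
  · rintro ⟨h, hF⟩
    refine ⟨fun i hi => by simpa [List.getElem_append_left hi] using h i (by omega),
      fun i hi => ?_, by simpa [Nat.add_comm] using hF⟩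
    simpa [List.getElem_append_right] using h (i + p.length) (by omega)
  · rintro ⟨hp, hw, hF⟩
    refine ⟨fun i hi => ?_, by simpa [Nat.add_comm] using hF⟩
    rcases Nat.lt_or_ge i p.length with h | h
    · simpa [List.getElem_append_left h] using hp i h
    · simpa [List.getElem_append_right h, Nat.sub_add_cancel h] using hw (i - p.length) (by omega)

theorem exists_mem_Zcyl_of_val_ne_none {x : FullShift A} {n : ℕ}
    (h : ∀ i < n, x.val i ≠ none) : ∃ p : List A, p.length = n ∧ x ∈ Zcyl p ∅ := by
  refine ⟨List.ofFn fun i : Fin n => (x.val i).get (Option.isSome_iff_ne_none.2 (h i i.2)),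
    by simp, mem_Zcyl_iff.2 ⟨fun i hi => ?_, by simp⟩⟩
  simp

theorem continuousAt_shiftMap_iterate {x : FullShift A} {n : ℕ}
    (h : ∀ i < n, x.val i ≠ none) : ContinuousAt shiftMap^[n] x := by
  obtain ⟨p, rfl, hp⟩ := exists_mem_Zcyl_of_val_ne_none h
  refine (isTopologicalBasis_Zcyl.nhds_hasBasis.tendsto_right_iff).2 ?_
  rintro _ ⟨⟨w, F, rfl⟩, hx⟩
  filter_upwards [(isOpen_Zcyl (p ++ w) F).mem_nhds (mem_Zcyl_append.2 ⟨hp, hx⟩)] with z hz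
  exact (mem_Zcyl_append.1 hz).2

end Cylinders

section Compact

open Classical in
noncomputable def ultrafilterLetter (f : Ultrafilter (FullShift A)) (n : ℕ) : Option A :=
  if h : ∃ a, {x : FullShift A | x.val n = some a} ∈ f then some h.choose else none

theorem ultrafilterLetter_eq_some_iff {f : Ultrafilter (FullShift A)} {n : ℕ} {a : A} :
    ultrafilterLetter f n = some a ↔ {x : FullShift A | x.val n = some a} ∈ f := by
  unfold ultrafilterLetter
  split_ifs with h
  · refine ⟨fun e => Option.some_injective _ e ▸ h.choose_spec, fun ha => congrArg some ?_⟩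
    obtain ⟨x, hx, hx'⟩ := Filter.nonempty_of_mem (Filter.inter_mem h.choose_spec ha)
    exact Option.some_injective _ (hx.symm.trans hx')
  · exact ⟨fun e => (nomatch e), fun ha => absurd ⟨a, ha⟩ h⟩

noncomputable def ultrafilterLimit (f : Ultrafilter (FullShift A)) : FullShift A where
  val n := open Classical in
    if ∀ m ≤ n, ultrafilterLetter f m ≠ none then ultrafilterLetter f n else none
  tail n hn := by
    rw [if_neg]
    intro h
    rw [if_pos fun m hm => h m (by omega)] at hn
    exact h n (by omega) hn

theorem ultrafilterLetter_eq_of_limit_eq_some {f : Ultrafilter (FullShift A)} {n : ℕ} {a : A}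
    (h : (ultrafilterLimit f).val n = some a) : ultrafilterLetter f n = some a := by
  simp only [ultrafilterLimit] at h
  split_ifs at h
  exact h

theorem ultrafilterLetter_eq_none_of_limit_eq_none {f : Ultrafilter (FullShift A)} {n : ℕ}
    (h : (ultrafilterLimit f).val n = none) (hlt : ∀ m < n, (ultrafilterLimit f).val m ≠ none) :
    ultrafilterLetter f n = none := by
  simp only [ultrafilterLimit] at h
  split_ifs at h with hall
  · exact h
  · push Not at hall
    obtain ⟨m, hmn, hm⟩ := hall
    rcases hmn.lt_or_eq with hmn | rfl
    · obtain ⟨a, ha⟩ := Option.ne_none_iff_exists'.1 (hlt m hmn)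
      rw [ultrafilterLetter_eq_of_limit_eq_some ha] at hm
      exact nomatch hm
    · exact hm

theorem Zcyl_mem_of_ultrafilterLimit_mem {f : Ultrafilter (FullShift A)} {w : List A}
    {F : Finset A} (h : ultrafilterLimit f ∈ Zcyl w F) : Zcyl w F ∈ f := by
  obtain ⟨hw, hF⟩ := h
  change ∀ᶠ x in (f : Filter (FullShift A)), x ∈ Zcyl w F
  refine eventually_and.2 ⟨eventually_all.2 fun i => ?_, (eventually_all_finset F).2 fun a ha => ?_⟩
  · exact ultrafilterLetter_eq_some_iff.1 (ultrafilterLetter_eq_of_limit_eq_some (hw i))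
  · cases hz : (ultrafilterLimit f).val w.length with
    | some c =>
      filter_upwards [ultrafilterLetter_eq_some_iff.1 (ultrafilterLetter_eq_of_limit_eq_some hz)]
        with x hx
      exact hx ▸ hz ▸ hF a ha
    | none =>
      have hnone := ultrafilterLetter_eq_none_of_limit_eq_none hz fun m hm => by
        simp [hw ⟨m, hm⟩]
      refine Ultrafilter.compl_mem_iff_notMem.2 fun hmem => ?_
      rw [ultrafilterLetter_eq_some_iff.2 hmem] at hnone
      exact nomatch hnone

theorem ultrafilterLimit_le_nhds (f : Ultrafilter (FullShift A)) :
    (f : Filter (FullShift A)) ≤ 𝓝 (ultrafilterLimit f) :=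
  isTopologicalBasis_Zcyl.nhds_hasBasis.ge_iff.2 <| by
    rintro _ ⟨⟨w, F, rfl⟩, h⟩
    exact Zcyl_mem_of_ultrafilterLimit_mem h

instance : CompactSpace (FullShift A) :=
  ⟨isCompact_iff_ultrafilter_le_nhds.2 fun f _ =>
    ⟨ultrafilterLimit f, Set.mem_univ _, ultrafilterLimit_le_nhds f⟩⟩

end Compact

section FinUnionCyl

theorem isFinUnionCyl_inter_biUnion {ι : Type*} (Λ : Set (FullShift A)) (t : Finset ι)
    (w : ι → List A) (F : ι → Finset A) :
    IsFinUnionCyl Λ (Λ ∩ ⋃ i ∈ t, Zcyl (w i) (F i)) := by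
  refine ⟨t.card, fun j => w (t.equivFin.symm j), fun j => F (t.equivFin.symm j), ?_⟩
  ext x
  simp only [Set.mem_inter_iff, Set.mem_iUnion, exists_prop]
  refine and_congr_right fun _ => ⟨fun ⟨i, hi, hx⟩ => ⟨t.equivFin ⟨i, hi⟩, by simpa using hx⟩,
    fun ⟨j, hx⟩ => ⟨_, (t.equivFin.symm j).2, hx⟩⟩

theorem IsFinUnionCyl.exists_isClopen {Λ S : Set (FullShift A)} (h : IsFinUnionCyl Λ S) :
    ∃ U, IsClopen U ∧ S = Λ ∩ U := by
  obtain ⟨n, w, F, rfl⟩ := h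
  exact ⟨_, isClopen_iUnion_of_finite fun i => isClopen_Zcyl (w i) (F i), rfl⟩

theorem isFinUnionCyl_inter_of_isCompact {Λ U : Set (FullShift A)} (hU : IsOpen U)
    (hK : IsCompact (Λ ∩ U)) : IsFinUnionCyl Λ (Λ ∩ U) := by
  obtain ⟨t, ht⟩ := hK.elim_finite_subcover
    (fun i : {p : List A × Finset A // Zcyl p.1 p.2 ⊆ U} => Zcyl i.1.1 i.1.2)
    (fun i => isOpen_Zcyl _ _) fun x hx => by
      obtain ⟨_, ⟨w, F, rfl⟩, hxw, hwU⟩ := isTopologicalBasis_Zcyl.exists_subset_of_mem_open hx.2 hU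
      exact Set.mem_iUnion.2 ⟨⟨(w, F), hwU⟩, hxw⟩
  convert isFinUnionCyl_inter_biUnion Λ t (fun i => i.1.1) (fun i => i.1.2) using 1
  exact Set.Subset.antisymm (fun x hx => ⟨hx.1, ht hx⟩)
    (Set.inter_subset_inter_right _ (Set.iUnion₂_subset fun i _ => i.2))

def initialBlock (x : FullShift A) (n : ℕ) : List (Option A) :=
  List.ofFn fun i : Fin n => x.val i

theorem prefixed_initialBlock_iff {x z : FullShift A} {n : ℕ} :
    Prefixed z (initialBlock x n) ↔ ∀ i < n, z.val i = x.val i := by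
  simp [Prefixed, initialBlock, Fin.forall_iff]

theorem finitelyDefinedIn_inter {Λ U : Set (FullShift A)} (L : ℕ)
    (hU : ∀ x z, (∀ i ≤ L, x.val i = z.val i) → x ∈ U → z ∈ U) :
    FinitelyDefinedIn Λ (Λ ∩ U) := by
  have hne : ∀ x : FullShift A, initialBlock x (L + 1) ≠ [] := by simp [initialBlock]
  refine ⟨(initialBlock · (L + 1)) '' U, (initialBlock · (L + 1)) '' Uᶜ,
    by rintro _ ⟨x, -, rfl⟩; exact hne x, by rintro _ ⟨x, -, rfl⟩; exact hne x, ?_, ?_⟩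
  · ext z
    refine ⟨fun ⟨hzΛ, hzU⟩ => ⟨hzΛ, _, ⟨z, hzU, rfl⟩, prefixed_initialBlock_iff.2 fun _ _ => rfl⟩,
      ?_⟩
    rintro ⟨hzΛ, _, ⟨x, hxU, rfl⟩, hz⟩
    exact ⟨hzΛ, hU x z (fun i hi => (prefixed_initialBlock_iff.1 hz i (by omega)).symm) hxU⟩
  · ext z
    simp only [Set.mem_sdiff, Set.mem_inter_iff, not_and, Set.mem_ofPred_eq]
    refine ⟨fun ⟨hzΛ, hzU⟩ =>
      ⟨hzΛ, _, ⟨z, hzU hzΛ, rfl⟩, prefixed_initialBlock_iff.2 fun _ _ => rfl⟩, ?_⟩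
    rintro ⟨hzΛ, _, ⟨x, hxU, rfl⟩, hz⟩
    exact ⟨hzΛ, fun _ hzU => hxU (hU z x (fun i hi => prefixed_initialBlock_iff.1 hz i (by omega)) hzU)⟩

theorem IsFinUnionCyl.finitelyDefinedIn {Λ S : Set (FullShift A)} (h : IsFinUnionCyl Λ S) :
    FinitelyDefinedIn Λ S := by
  obtain ⟨n, w, F, rfl⟩ := h
  refine finitelyDefinedIn_inter (Finset.univ.sup fun i => (w i).length) fun x z hxz hx => ?_
  obtain ⟨i, hi⟩ := Set.mem_iUnion.1 hx
  have hle : (w i).length ≤ Finset.univ.sup fun i => (w i).length :=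
    Finset.le_sup (f := fun i => (w i).length) (Finset.mem_univ i)
  exact Set.mem_iUnion.2 ⟨i, (mem_Zcyl_congr fun j hj => hxz j (hj.trans hle)).1 hi⟩

end FinUnionCyl

section Forward

variable {Λ : Set (FullShift A)} {Φ : FullShift A → FullShift B}

theorem map_shiftMap_iterate (hσ : Set.MapsTo shiftMap Λ Λ)
    (hΦ : ∀ x ∈ Λ, Φ (shiftMap x) = shiftMap (Φ x)) {x : FullShift A} (hx : x ∈ Λ) (n : ℕ) :
    Φ (shiftMap^[n] x) = shiftMap^[n] (Φ x) := by
  induction n with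
  | zero => rfl
  | succ n ih =>
    rw [Function.iterate_succ_apply', Function.iterate_succ_apply', hΦ _ (hσ.iterate n hx), ih]

def firstEntryClass (Λ : Set (FullShift A)) (Φ : FullShift A → FullShift B) (a : Option B) :
    Set (FullShift A) :=
  {x ∈ Λ | (Φ x).val 0 = a}

theorem firstEntryClass_none :
    firstEntryClass Λ Φ none = Λ ∩ Φ ⁻¹' {emptySeq} := by
  ext x
  exact and_congr_right fun _ => ⟨eq_emptySeq_of_val_zero, fun h => by rw [h]; rfl⟩

theorem isFinUnionCyl_firstEntryClass (hΛ : IsClosed Λ) (hΦ : ContinuousOn Φ Λ) (b : B) :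
    IsFinUnionCyl Λ (firstEntryClass Λ Φ (some b)) := by
  have hclass : firstEntryClass Λ Φ (some b) = Λ ∩ Φ ⁻¹' Zcyl [b] ∅ := by
    ext x
    simp [firstEntryClass, mem_Zcyl_iff]
  obtain ⟨u, hu, hequ⟩ := continuousOn_iff'.1 hΦ _ (isOpen_Zcyl [b] ∅)
  have hopen : firstEntryClass Λ Φ (some b) = Λ ∩ u := by
    rw [hclass, Set.inter_comm, hequ, Set.inter_comm]
  have hcompact : IsCompact (Λ ∩ u) := by
    rw [← hopen, hclass]
    exact (hΦ.preimage_isClosed_of_isClosed hΛ (isClosed_Zcyl _ _)).isCompact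
  rw [hopen]
  exact isFinUnionCyl_inter_of_isCompact hu hcompact

theorem isSBCWith_firstEntryClass (hσ : Set.MapsTo shiftMap Λ Λ)
    (hΦ : ∀ x ∈ Λ, Φ (shiftMap x) = shiftMap (Φ x))
    (hfd : ∀ a, FinitelyDefinedIn Λ (firstEntryClass Λ Φ a)) :
    IsSBCWith Λ Φ (firstEntryClass Λ Φ) := by
  refine ⟨fun _ _ hx => hx.1, fun x hx => ⟨_, ⟨hx, rfl⟩, fun a h => h.2.symm⟩, hfd, ?_, ?_⟩
  · rintro x ⟨hx, hx0⟩
    refine ⟨hσ hx, ?_⟩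
    rw [hΦ x hx, eq_emptySeq_of_val_zero hx0]
    rfl
  · intro x hx n
    refine ⟨hσ.iterate n hx, ?_⟩
    rw [map_shiftMap_iterate hσ hΦ hx, val_shiftMap_iterate, zero_add]

end Forward

namespace IsSBCWith

variable {Λ : Set (FullShift A)} {Φ : FullShift A → FullShift B}
  {C : Option B → Set (FullShift A)}

theorem shiftMap_iterate_mem (hC : IsSBCWith Λ Φ C) {x : FullShift A} (hx : x ∈ Λ) (n : ℕ) :
    shiftMap^[n] x ∈ Λ :=
  hC.1 _ (hC.2.2.2.2 x hx n)

theorem val_eq_iff (hC : IsSBCWith Λ Φ C) {x : FullShift A} (hx : x ∈ Λ) (n : ℕ)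
    (a : Option B) : (Φ x).val n = a ↔ shiftMap^[n] x ∈ C a := by
  refine ⟨fun h => h ▸ hC.2.2.2.2 x hx n, fun h => ?_⟩
  exact (hC.2.1 _ (hC.shiftMap_iterate_mem hx n)).unique (hC.2.2.2.2 x hx n) h

theorem map_shiftMap (hC : IsSBCWith Λ Φ C) {x : FullShift A} (hx : x ∈ Λ) :
    Φ (shiftMap x) = shiftMap (Φ x) := by
  have hσx : shiftMap x ∈ Λ := hC.shiftMap_iterate_mem hx 1
  refine FullShift.ext <| funext fun n => (hC.val_eq_iff hσx n _).2 ?_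
  rw [← Function.iterate_succ_apply]
  exact hC.2.2.2.2 x hx (n + 1)

theorem val_ne_none_of_val_eq_some (hC : IsSBCWith Λ Φ C) (hOO : Φ emptySeq = emptySeq)
    {x : FullShift A} (hx : x ∈ Λ) {n : ℕ} {b : B} (h : (Φ x).val n = some b) :
    x.val n ≠ none := by
  intro hxn
  rw [hC.val_eq_iff hx, shiftMap_iterate_eq_emptySeq hxn] at h
  have hemp : emptySeq ∈ Λ := hC.1 _ h
  have := (hC.val_eq_iff hemp 0 (some b)).2 h
  rw [hOO] at this
  exact nomatch this

theorem eventually_val_eq_some_iff (hC : IsSBCWith Λ Φ C)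
    (hcyl : ∀ b, IsFinUnionCyl Λ (C (some b))) {y : FullShift A} (hy : y ∈ Λ) {n : ℕ}
    (hlet : ∀ i < n, y.val i ≠ none) (b : B) :
    ∀ᶠ x in 𝓝[Λ] y, ((Φ x).val n = some b ↔ (Φ y).val n = some b) := by
  obtain ⟨U, hU, hCU⟩ := (hcyl b).exists_isClopen
  have hU_nhds : ∀ᶠ z in 𝓝 (shiftMap^[n] y), (z ∈ U ↔ shiftMap^[n] y ∈ U) := by
    by_cases hyU : shiftMap^[n] y ∈ U
    · filter_upwards [hU.isOpen.mem_nhds hyU] with z hz using iff_of_true hz hyU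
    · filter_upwards [hU.compl.isOpen.mem_nhds hyU] with z hz using iff_of_false hz hyU
  filter_upwards [mem_nhdsWithin_of_mem_nhds ((continuousAt_shiftMap_iterate hlet).eventually
    hU_nhds), self_mem_nhdsWithin] with x hx hxΛ
  rw [hC.val_eq_iff hxΛ, hC.val_eq_iff hy, hCU, Set.mem_inter_iff, Set.mem_inter_iff, hx,
    and_iff_right (hC.shiftMap_iterate_mem hxΛ n), and_iff_right (hC.shiftMap_iterate_mem hy n)]

theorem continuousOn (hC : IsSBCWith Λ Φ C) (hOO : Φ emptySeq = emptySeq)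
    (hcyl : ∀ b, IsFinUnionCyl Λ (C (some b))) : ContinuousOn Φ Λ := by
  intro y hy
  refine isTopologicalBasis_Zcyl.nhds_hasBasis.tendsto_right_iff.2 ?_
  rintro _ ⟨⟨v, G, rfl⟩, hyv, hyG⟩
  have hlet : ∀ i < v.length, y.val i ≠ none := fun i hi =>
    hC.val_ne_none_of_val_eq_some hOO hy (hyv ⟨i, hi⟩)
  have hev := fun n (hn : n ≤ v.length) =>
    hC.eventually_val_eq_some_iff hcyl hy (n := n) fun i hi => hlet i (by omega)
  refine eventually_and.2 ⟨eventually_all.2 fun i => ?_, (eventually_all_finset G).2 fun a ha => ?_⟩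
  · filter_upwards [hev i i.2.le (v.get i)] with x hx using hx.2 (hyv i)
  · filter_upwards [hev v.length le_rfl a] with x hx using fun h => hyG a ha (hx.1 h)

end IsSBCWith

theorem curtis_hedlund_lyndon_one_general {A B : Type*}
    (Λ : Set (FullShift A))
    (hΛ : IsShiftSpace Λ)
    (Φ : FullShift A → FullShift B)
    (hOO : Φ emptySeq = emptySeq)
    (hfd : FinitelyDefinedIn Λ (Λ ∩ Φ ⁻¹' {emptySeq})) :
    (ContinuousOn Φ Λ ∧ ∀ x ∈ Λ, Φ (shiftMap x) = shiftMap (Φ x)) ↔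
      ∃ C : Option B → Set (FullShift A), IsSBCWith Λ Φ C ∧
        ∀ b : B, IsFinUnionCyl Λ (C (some b)) := by
  constructor
  · rintro ⟨hcont, hcomm⟩
    have hcyl := isFinUnionCyl_firstEntryClass hΛ.1 hcont
    refine ⟨firstEntryClass Λ Φ, isSBCWith_firstEntryClass hΛ.2.1 hcomm fun a => ?_, hcyl⟩
    cases a with
    | none => rwa [firstEntryClass_none]
    | some b => exact (hcyl b).finitelyDefinedIn
  · rintro ⟨C, hC, hcyl⟩
    exact ⟨hC.continuousOn hOO hcyl, fun x hx => hC.map_shiftMap hx⟩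

/-- Curtis-Hedlund-Lyndon theorem, first form. Assuming `Φ(Ø) = Ø`
and `Φ⁻¹(Ø)` finitely defined, `Φ` is continuous and shift commuting iff `Φ` is a
sliding block code whose classes `C_a` (for letters `a` of `Γ`) are finite unions
of generalized cylinders of `Λ`. -/
theorem curtis_hedlund_lyndon_one {A B : Type*} [Countable A] [Infinite A] [Countable B] [Infinite B]
    (Λ : Set (FullShift A)) (Γ : Set (FullShift B))
    (hΛ : IsShiftSpace Λ) (hΓ : IsShiftSpace Γ)
    (Φ : FullShift A → FullShift B) (hmap : Set.MapsTo Φ Λ Γ)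
    (hO : emptySeq ∈ Λ) (hOO : Φ emptySeq = emptySeq)
    (hfd : FinitelyDefinedIn Λ (Λ ∩ Φ ⁻¹' {emptySeq})) :
    (ContinuousOn Φ Λ ∧ ∀ x ∈ Λ, Φ (shiftMap x) = shiftMap (Φ x)) ↔
      ∃ C : Option B → Set (FullShift A), IsSBCWith Λ Φ C ∧
        ∀ b : B, IsFinUnionCyl Λ (C (some b)) :=
  curtis_hedlund_lyndon_one_general Λ hΛ Φ hOO hfd

end OTW
end

section
/- If Λ ⊆ Σ_A is an Ott-Tomforde-Willis shift space, then its image Λ^(M) = Ξ^(M)(Λ) under the M-th higher block code is a shift space in Σ_{A^(M)}: it is closed, shift-invariant, and satisfies the infinite extension property. -/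
namespace OTW

variable {A B : Type*}

/-!
A word `u` with at least `M` letters is sent by the higher block code to the word `blocks M u`
of its `M`-blocks, and `u` occurs in `x` exactly where `blocks M u` occurs in `Ξ^(M) x`. So the
followers of `blocks M u` in `Λ^(M)` are the last blocks of the words `u ++ [b]` with `b` a
follower of `u` in `Λ`, which transfers the infinite extension property; and `Ø ∈ Λ^(M)` iff
some point of `Λ` dies before position `M`, iff `Ø ∈ Λ`.

For closedness, a point `Y` of the closure of `Λ^(M)` is decoded through the approximating
points: if `Y` never dies, the first letters of its blocks give a point of `closure Λ = Λ`;
if `Y = finSeq (blocks M u)`, then `finSeq u ∈ closure Λ`, using the cylinder that forbids the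
finitely many blocks extending `u` by a forbidden letter; `Y = Ø` is handled by the letters.
-/

def OccursAt (x : FullShift A) (n : ℕ) (w : List A) : Prop :=
  ∀ i (hi : i < w.length), x.val (n + i) = some w[i]

theorem isBlock_iff_exists_occursAt {Λ : Set (FullShift A)} {w : List A} :
    IsBlock Λ w ↔ ∃ x ∈ Λ, ∃ n, OccursAt x n w :=
  ⟨fun ⟨x, hx, n, h⟩ => ⟨x, hx, n, fun i hi => h ⟨i, hi⟩⟩,
    fun ⟨x, hx, n, h⟩ => ⟨x, hx, n, fun i => h i i.2⟩⟩

theorem OccursAt.eq_of_length_eq {x : FullShift A} {n : ℕ} {w w' : List A}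
    (h : OccursAt x n w) (h' : OccursAt x n w') (hlen : w.length = w'.length) : w = w' :=
  List.ext_getElem hlen fun i hi hi' => Option.some_inj.mp ((h i hi).symm.trans (h' i hi'))

theorem occursAt_nil (x : FullShift A) (n : ℕ) : OccursAt x n [] :=
  fun _ hi => absurd hi (Nat.not_lt_zero _)

theorem OccursAt.val_eq {x y : FullShift A} {n : ℕ} {w : List A} (hx : OccursAt x n w)
    (hy : OccursAt y n w) {i : ℕ} (hi : i < w.length) : x.val (n + i) = y.val (n + i) :=
  (hx i hi).trans (hy i hi).symm

theorem occursAt_append_singleton_iff {x : FullShift A} {n : ℕ} {w : List A} {a : A} :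
    OccursAt x n (w ++ [a]) ↔ OccursAt x n w ∧ x.val (n + w.length) = some a := by
  constructor
  · intro h
    refine ⟨fun i hi => ?_, ?_⟩
    · have h' := h i (by simp; omega)
      rwa [List.getElem_append_left hi] at h'
    · simpa using h w.length (by simp)
  · rintro ⟨h, ha⟩ i hi
    simp only [List.length_append, List.length_singleton] at hi
    rcases Nat.lt_or_ge i w.length with hi' | hi'
    · rw [List.getElem_append_left hi']
      exact h i hi'
    · obtain rfl : i = w.length := by omega
      simpa using ha

theorem exists_occursAt_of_forall_ne_none {x : FullShift A} {n L : ℕ}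
    (h : ∀ t < L, x.val (n + t) ≠ none) : ∃ w, w.length = L ∧ OccursAt x n w := by
  choose a ha using fun t : Fin L => Option.ne_none_iff_exists'.mp (h t t.2)
  exact ⟨List.ofFn a, List.length_ofFn,
    fun i hi => by simpa using ha ⟨i, by simpa using hi⟩⟩

theorem IsBlock.getElem_mem_letters {Λ : Set (FullShift A)} {w : List A} (h : IsBlock Λ w)
    (i : ℕ) (hi : i < w.length) : w[i] ∈ letters Λ :=
  let ⟨x, hx, n, hxw⟩ := h
  ⟨x, hx, n + i, by simpa using hxw ⟨i, hi⟩⟩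

theorem isBlock_singleton {Λ : Set (FullShift A)} {a : A} (h : a ∈ letters Λ) :
    IsBlock Λ [a] :=
  let ⟨x, hx, i, hxa⟩ := h
  isBlock_iff_exists_occursAt.mpr ⟨x, hx, i, fun j hj => by
    obtain rfl : j = 0 := by simpa using hj
    simpa using hxa⟩

theorem finSeq_val_of_length_le {w : List A} {i : ℕ} (h : w.length ≤ i) :
    (finSeq w).val i = none := by
  simp [finSeq, h]

theorem occursAt_finSeq (w : List A) : OccursAt (finSeq w) 0 w := fun i hi => by
  simp [finSeq, List.head?_drop, hi]

theorem eq_finSeq_iff {x : FullShift A} {w : List A} :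
    x = finSeq w ↔ OccursAt x 0 w ∧ x.val w.length = none := by
  constructor
  · rintro rfl
    exact ⟨occursAt_finSeq w, finSeq_val_of_length_le le_rfl⟩
  · rintro ⟨hw, hnone⟩
    ext i : 2
    rcases Nat.lt_or_ge i w.length with hi | hi
    · simpa using hw.val_eq (occursAt_finSeq w) hi
    · rw [finSeq_val_of_length_le hi]
      exact val_none_mono x hi hnone

theorem finSeq_nil : finSeq ([] : List A) = emptySeq :=
  (eq_finSeq_iff.mpr ⟨occursAt_nil _ 0, rfl⟩).symm

theorem eq_emptySeq_iff {x : FullShift A} : x = emptySeq ↔ x.val 0 = none := by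
  rw [← finSeq_nil, eq_finSeq_iff]
  exact and_iff_right (occursAt_nil x 0)

theorem exists_eq_finSeq {x : FullShift A} {n : ℕ} (hn : x.val n = none) :
    ∃ w, x = finSeq w := by
  classical
  have hex : ∃ k, x.val k = none := ⟨n, hn⟩
  obtain ⟨w, hlen, hw⟩ := exists_occursAt_of_forall_ne_none (x := x) (n := 0)
    fun t ht => by simpa using Nat.find_min hex ht
  exact ⟨w, eq_finSeq_iff.mpr ⟨hw, hlen ▸ Nat.find_spec hex⟩⟩

theorem shiftMap_iterate_val (x : FullShift A) (n i : ℕ) :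
    (shiftMap^[n] x).val i = x.val (n + i) := by
  induction n generalizing x with
  | zero => simp
  | succ n ih =>
    rw [Function.iterate_succ_apply, ih]
    exact congrArg x.val (by omega)

theorem higherBlock_val_eq_some_iff {M : ℕ} {x : FullShift A} {i : ℕ} {B : Fin M → A} :
    (higherBlock M x).val i = some B ↔ ∀ j : Fin M, x.val (i + j) = some (B j) := by
  simp only [higherBlock]
  split_ifs with h
  · rw [Option.some_inj, funext_iff]
    exact forall_congr' fun j =>
      ⟨fun hB => by rw [← hB, Option.some_get], fun hB => by simp [hB]⟩
  · simp only [false_iff]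
    exact fun hB => h fun j => by simp [hB j]

theorem higherBlock_val_eq_none_iff {N : ℕ} {x : FullShift A} {i : ℕ} :
    (higherBlock (N + 1) x).val i = none ↔ x.val (i + N) = none := by
  simp only [higherBlock, dite_eq_right_iff, reduceCtorEq, imp_false, not_forall,
    Option.not_isSome_iff_eq_none]
  exact ⟨fun ⟨j, hj⟩ => val_none_mono x (by omega) hj, fun h => ⟨Fin.last N, h⟩⟩

theorem higherBlock_shiftMap (M : ℕ) (x : FullShift A) :
    higherBlock M (shiftMap x) = shiftMap (higherBlock M x) := by
  ext i : 2
  simp only [higherBlock, shiftMap, Nat.add_right_comm]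
  rfl

theorem higherBlock_emptySeq (N : ℕ) :
    higherBlock (N + 1) (emptySeq : FullShift A) = emptySeq := by
  ext i : 2
  exact higherBlock_val_eq_none_iff.mpr rfl

def blocks (M : ℕ) (u : List A) : List (Fin M → A) :=
  List.ofFn fun i : Fin (u.length + 1 - M) => fun j : Fin M => u[(i : ℕ) + j]

@[simp]
theorem length_blocks (M : ℕ) (u : List A) : (blocks M u).length = u.length + 1 - M :=
  List.length_ofFn

theorem blocks_ne_nil_iff {M : ℕ} {u : List A} : blocks M u ≠ [] ↔ M ≤ u.length := by
  rw [← List.length_pos_iff, length_blocks]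
  omega

@[simp]
theorem getElem_blocks {M : ℕ} {u : List A} {i : ℕ} (hi : i < (blocks M u).length) (j : Fin M) :
    (blocks M u)[i] j = u[i + (j : ℕ)]'(by simp at hi; omega) :=
  congrFun (List.getElem_ofFn (by simpa [blocks] using hi)) j

/-- The last `M`-block of `u ++ [b]`. -/
def nextBlock {M : ℕ} (u : List A) (b : A) : Fin M → A :=
  fun j => (u ++ [b]).getD (u.length + 1 - M + j) b

theorem nextBlock_last {N : ℕ} (u : List A) (b : A) :
    nextBlock (M := N + 1) u b (Fin.last N) = b := by
  rcases Nat.lt_or_ge u.length N with h | h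
  · exact List.getD_eq_default _ _ (by simp; omega)
  · rw [nextBlock, List.getD_eq_getElem _ _ (by simp; omega)]
    simp [show u.length - N + N = u.length by omega]

theorem nextBlock_injective {N : ℕ} (u : List A) :
    Function.Injective (nextBlock (M := N + 1) u) := fun b b' h => by
  simpa only [nextBlock_last] using congrFun h (Fin.last N)

theorem blocks_append_singleton {M : ℕ} {u : List A} (b : A) (hu : M ≤ u.length + 1) :
    blocks M (u ++ [b]) = blocks M u ++ [nextBlock u b] := by
  refine List.ext_getElem (by simp; omega) fun i hi hi' => funext fun j => ?_
  simp only [length_blocks, List.length_append, List.length_singleton] at hi hi'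
  rw [getElem_blocks]
  rcases Nat.lt_or_ge i (u.length + 1 - M) with h | h
  · rw [List.getElem_append_left (as := blocks M u) (by simpa using h), getElem_blocks,
      List.getElem_append_left (by omega)]
  · obtain rfl : i = u.length + 1 - M := by omega
    rw [List.getElem_append_right (as := blocks M u) (by simp)]
    simp only [List.getElem_singleton]
    exact (List.getD_eq_getElem _ _ _).symm

theorem OccursAt.higherBlock {M : ℕ} {x : FullShift A} {n : ℕ} {u : List A}
    (h : OccursAt x n u) : OccursAt (higherBlock M x) n (blocks M u) := fun i hi =>
  higherBlock_val_eq_some_iff.mpr fun j => by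
    simpa [Nat.add_assoc] using h (i + j) (by simp at hi; omega)

theorem occursAt_higherBlock_blocks_iff {N : ℕ} {x : FullShift A} {n : ℕ} {u : List A}
    (hu : N + 1 ≤ u.length) :
    OccursAt (higherBlock (N + 1) x) n (blocks (N + 1) u) ↔ OccursAt x n u := by
  refine ⟨fun h t ht => ?_, OccursAt.higherBlock⟩
  -- read `u_t` off the block starting at `min t (|u| - N - 1)`
  set i := min t (u.length - (N + 1))
  have := higherBlock_val_eq_some_iff.mp (h i (by simp; omega)) ⟨t - i, by omega⟩
  simpa [show n + i + (t - i) = n + t by omega, show i + (t - i) = t by omega] using this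

theorem exists_occursAt_of_occursAt_higherBlock {N : ℕ} {x : FullShift A} {n : ℕ}
    {W : List (Fin (N + 1) → A)} (h : OccursAt (higherBlock (N + 1) x) n W) (hW : W ≠ []) :
    ∃ u, OccursAt x n u ∧ blocks (N + 1) u = W := by
  have hWpos := List.length_pos_iff.mpr hW
  obtain ⟨u, hlen, hu⟩ := exists_occursAt_of_forall_ne_none (x := x) (n := n)
    (L := W.length + N) fun t ht => by
      set i := min t (W.length - 1)
      have := higherBlock_val_eq_some_iff.mp (h i (by omega)) ⟨t - i, by omega⟩
      rw [Fin.val_mk, show n + i + (t - i) = n + t by omega] at this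
      simp [this]
  exact ⟨u, hu, hu.higherBlock.eq_of_length_eq h (by simp; omega)⟩

theorem higherBlock_finSeq (N : ℕ) (u : List A) :
    higherBlock (N + 1) (finSeq u) = finSeq (blocks (N + 1) u) :=
  eq_finSeq_iff.mpr ⟨(occursAt_finSeq u).higherBlock,
    higherBlock_val_eq_none_iff.mpr (finSeq_val_of_length_le (by simp; omega))⟩

theorem IsBlock.image_higherBlock {M : ℕ} {Λ : Set (FullShift A)} {u : List A}
    (h : IsBlock Λ u) : IsBlock (higherBlock M '' Λ) (blocks M u) :=
  let ⟨x, hx, n, hxu⟩ := isBlock_iff_exists_occursAt.mp h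
  isBlock_iff_exists_occursAt.mpr ⟨_, ⟨x, hx, rfl⟩, n, hxu.higherBlock⟩

theorem IsBlock.exists_of_image_higherBlock {N : ℕ} {Λ : Set (FullShift A)}
    {W : List (Fin (N + 1) → A)} (h : IsBlock (higherBlock (N + 1) '' Λ) W) (hW : W ≠ []) :
    ∃ u, IsBlock Λ u ∧ blocks (N + 1) u = W := by
  obtain ⟨_, ⟨x, hx, rfl⟩, n, hxW⟩ := isBlock_iff_exists_occursAt.mp h
  obtain ⟨u, hxu, rfl⟩ := exists_occursAt_of_occursAt_higherBlock hxW hW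
  exact ⟨u, isBlock_iff_exists_occursAt.mpr ⟨x, hx, n, hxu⟩, rfl⟩

theorem followers_image_higherBlock {N : ℕ} {Λ : Set (FullShift A)} {u : List A}
    (hu : N + 1 ≤ u.length) :
    {B | IsBlock (higherBlock (N + 1) '' Λ) (blocks (N + 1) u ++ [B])} =
      nextBlock u '' {b | IsBlock Λ (u ++ [b])} := by
  ext B
  constructor
  · intro hB
    obtain ⟨_, ⟨x, hx, rfl⟩, n, hxB⟩ := isBlock_iff_exists_occursAt.mp hB
    obtain ⟨hxu, hxB⟩ := occursAt_append_singleton_iff.mp hxB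
    rw [occursAt_higherBlock_blocks_iff hu] at hxu
    have hlast := higherBlock_val_eq_some_iff.mp hxB (Fin.last N)
    rw [length_blocks, Fin.val_last, show n + (u.length + 1 - (N + 1)) + N = n + u.length by omega]
      at hlast
    have hxub : OccursAt x n (u ++ [B (Fin.last N)]) :=
      occursAt_append_singleton_iff.mpr ⟨hxu, hlast⟩
    refine ⟨B (Fin.last N), isBlock_iff_exists_occursAt.mpr ⟨x, hx, n, hxub⟩, ?_⟩
    have hnext := hxub.higherBlock (M := N + 1)
    rw [blocks_append_singleton _ (by omega), occursAt_append_singleton_iff] at hnext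
    exact Option.some_inj.mp (hnext.2.symm.trans hxB)
  · rintro ⟨b, hb, rfl⟩
    simpa [blocks_append_singleton b (by omega : N + 1 ≤ u.length + 1)] using
      hb.image_higherBlock (M := N + 1)

theorem finSeq_blocks_mem_image_higherBlock_iff {N : ℕ} {Λ : Set (FullShift A)} {u : List A}
    (hu : N + 1 ≤ u.length) :
    finSeq (blocks (N + 1) u) ∈ higherBlock (N + 1) '' Λ ↔ finSeq u ∈ Λ := by
  refine ⟨?_, fun h => ⟨_, h, higherBlock_finSeq N u⟩⟩
  rintro ⟨x, hx, hxu⟩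
  obtain ⟨hocc, hnone⟩ := eq_finSeq_iff.mp hxu
  rw [higherBlock_val_eq_none_iff, length_blocks, show u.length + 1 - (N + 1) + N = u.length by
    omega] at hnone
  exact eq_finSeq_iff.mpr ⟨(occursAt_higherBlock_blocks_iff hu).mp hocc, hnone⟩ ▸ hx

namespace IsShiftSpace

variable {Λ : Set (FullShift A)}

theorem shiftMap_iterate_mem (hΛ : IsShiftSpace Λ) {x : FullShift A} (hx : x ∈ Λ) (n : ℕ) :
    shiftMap^[n] x ∈ Λ := by
  induction n with
  | zero => exact hx
  | succ n ih => exact Function.iterate_succ_apply' shiftMap n x ▸ hΛ.2.1 _ ih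

theorem exists_isBlock_append_singleton (hΛ : IsShiftSpace Λ) {w : List A} (hw : w ≠ [])
    (hb : IsBlock Λ w) : ∃ b, IsBlock Λ (w ++ [b]) := by
  obtain ⟨x, hx, n, hxw⟩ := isBlock_iff_exists_occursAt.mp hb
  rcases hxb : x.val (n + w.length) with _ | b
  · -- the occurrence of `w` ends the sequence, so `finSeq w ∈ Λ` has infinitely many followers
    have hfin : shiftMap^[n] x = finSeq w := eq_finSeq_iff.mpr
      ⟨fun i hi => by simpa [shiftMap_iterate_val] using hxw i hi,
        by rwa [shiftMap_iterate_val]⟩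
    exact ((hΛ.2.2.2 w hw).mp (hfin ▸ hΛ.shiftMap_iterate_mem hx n)).nonempty
  · exact ⟨b, isBlock_iff_exists_occursAt.mpr
      ⟨x, hx, n, occursAt_append_singleton_iff.mpr ⟨hxw, hxb⟩⟩⟩

theorem exists_isBlock_append (hΛ : IsShiftSpace Λ) {w : List A} (hw : w ≠ [])
    (hb : IsBlock Λ w) (k : ℕ) : ∃ v : List A, v.length = k ∧ IsBlock Λ (w ++ v) := by
  induction k with
  | zero => exact ⟨[], rfl, by simpa using hb⟩
  | succ k ih =>
    obtain ⟨v, hlen, hv⟩ := ih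
    obtain ⟨b, hb⟩ := hΛ.exists_isBlock_append_singleton (by simp [hw]) hv
    exact ⟨v ++ [b], by simp [hlen], by rwa [← List.append_assoc]⟩

theorem emptySeq_mem_of_val_eq_none (hΛ : IsShiftSpace Λ) {x : FullShift A} (hx : x ∈ Λ)
    {n : ℕ} (hn : x.val n = none) : emptySeq ∈ Λ := by
  obtain ⟨w, rfl⟩ := exists_eq_finSeq hn
  rcases eq_or_ne w [] with rfl | hw
  · rwa [finSeq_nil] at hx
  refine hΛ.2.2.1.mpr (((hΛ.2.2.2 w hw).mp hx).mono fun b hb => ?_)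
  simpa using hb.getElem_mem_letters w.length (by simp)

theorem letters_image_higherBlock_infinite_iff (hΛ : IsShiftSpace Λ) (N : ℕ) :
    (letters (higherBlock (N + 1) '' Λ)).Infinite ↔ (letters Λ).Infinite := by
  constructor
  · refine fun h hfin => h ((Set.Finite.pi fun _ : Fin (N + 1) => hfin).subset ?_)
    rintro B ⟨_, ⟨x, hx, rfl⟩, i, hB⟩ j -
    exact ⟨x, hx, i + j, higherBlock_val_eq_some_iff.mp hB j⟩
  · -- every letter starts an `(N + 1)`-block, since blocks of a shift space extend
    refine fun h => Set.Infinite.of_image (fun B => B 0) (h.mono fun a ha => ?_)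
    obtain ⟨v, hlen, hv⟩ :=
      hΛ.exists_isBlock_append (List.cons_ne_nil a []) (isBlock_singleton ha) N
    refine ⟨_, hv.image_higherBlock.getElem_mem_letters 0 (by simp [hlen]), ?_⟩
    simp

theorem emptySeq_mem_image_higherBlock_iff (hΛ : IsShiftSpace Λ) (N : ℕ) :
    emptySeq ∈ higherBlock (N + 1) '' Λ ↔ (letters (higherBlock (N + 1) '' Λ)).Infinite := by
  rw [hΛ.letters_image_higherBlock_infinite_iff, ← hΛ.2.2.1]
  refine ⟨fun ⟨x, hx, hxe⟩ => hΛ.emptySeq_mem_of_val_eq_none hx (n := 0 + N) ?_,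
    fun h => ⟨emptySeq, h, higherBlock_emptySeq N⟩⟩
  exact higherBlock_val_eq_none_iff.mp (by rw [hxe]; rfl)

theorem finSeq_mem_image_higherBlock_iff (hΛ : IsShiftSpace Λ) {N : ℕ}
    {W : List (Fin (N + 1) → A)} (hW : W ≠ []) :
    finSeq W ∈ higherBlock (N + 1) '' Λ ↔
      {B | IsBlock (higherBlock (N + 1) '' Λ) (W ++ [B])}.Infinite := by
  suffices h : IsBlock (higherBlock (N + 1) '' Λ) W → (finSeq W ∈ higherBlock (N + 1) '' Λ ↔
      {B | IsBlock (higherBlock (N + 1) '' Λ) (W ++ [B])}.Infinite) by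
    refine ⟨fun hW' => (h ?_).mp hW', fun hinf => (h ?_).mpr hinf⟩
    · exact isBlock_iff_exists_occursAt.mpr ⟨_, hW', 0, occursAt_finSeq W⟩
    · obtain ⟨B, hB⟩ := hinf.nonempty
      obtain ⟨x, hx, n, hxB⟩ := isBlock_iff_exists_occursAt.mp hB
      exact isBlock_iff_exists_occursAt.mpr ⟨x, hx, n, (occursAt_append_singleton_iff.mp hxB).1⟩
  intro hWb
  obtain ⟨u, -, rfl⟩ := hWb.exists_of_image_higherBlock hW
  have hu := blocks_ne_nil_iff.mp hW
  rw [finSeq_blocks_mem_image_higherBlock_iff hu, followers_image_higherBlock hu,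
    Set.infinite_image_iff (nextBlock_injective u).injOn]
  exact hΛ.2.2.2 u (List.ne_nil_of_length_pos (by omega))

end IsShiftSpace

theorem mem_zcyl_iff {w : List A} {F : Finset A} {x : FullShift A} :
    x ∈ Zcyl w F ↔ OccursAt x 0 w ∧ ∀ a ∈ F, x.val w.length ≠ some a :=
  and_congr_left'
    ⟨fun h i hi => by simpa using h ⟨i, hi⟩, fun h i => by simpa using h i i.2⟩

theorem mem_zcyl_congr {w : List A} {F : Finset A} {x y : FullShift A}
    (h : ∀ t ≤ w.length, x.val t = y.val t) : x ∈ Zcyl w F ↔ y ∈ Zcyl w F := by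
  simp only [Zcyl, Set.mem_ofPred_eq, h _ le_rfl, fun i : Fin w.length => h i i.2.le]

theorem finSeq_mem_zcyl (w : List A) (F : Finset A) : finSeq w ∈ Zcyl w F :=
  mem_zcyl_iff.mpr ⟨occursAt_finSeq w, fun a _ => by simp [finSeq_val_of_length_le le_rfl]⟩

theorem zcyl_union [DecidableEq A] {w : List A} {F₁ F₂ : Finset A} :
    Zcyl w (F₁ ∪ F₂) = Zcyl w F₁ ∩ Zcyl w F₂ := by
  ext x
  simp only [Zcyl, Set.mem_inter_iff, Set.mem_ofPred_eq, Finset.mem_union, or_imp, forall_and]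
  tauto

theorem zcyl_subset_of_length_lt {w₁ w₂ : List A} {F₁ F₂ : Finset A} {x : FullShift A}
    (h₁ : x ∈ Zcyl w₁ F₁) (h₂ : x ∈ Zcyl w₂ F₂) (hlt : w₁.length < w₂.length) :
    Zcyl w₂ F₂ ⊆ Zcyl w₁ F₁ := fun y hy => by
  refine (mem_zcyl_congr fun t ht => ?_).mp h₁
  simpa using (mem_zcyl_iff.mp h₂).1.val_eq (mem_zcyl_iff.mp hy).1 (i := t) (by omega)

theorem exists_zcyl_subset_inter {w₁ w₂ : List A} {F₁ F₂ : Finset A} {x : FullShift A}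
    (h₁ : x ∈ Zcyl w₁ F₁) (h₂ : x ∈ Zcyl w₂ F₂) :
    ∃ w F, x ∈ Zcyl w F ∧ Zcyl w F ⊆ Zcyl w₁ F₁ ∩ Zcyl w₂ F₂ := by
  classical
  wlog hle : w₁.length ≤ w₂.length generalizing w₁ w₂ F₁ F₂
  · obtain ⟨w, F, hx, hsub⟩ := this h₂ h₁ (by omega)
    exact ⟨w, F, hx, hsub.trans (Set.inter_comm _ _).le⟩
  rcases hle.lt_or_eq with hlt | heq
  · exact ⟨w₂, F₂, h₂, Set.subset_inter (zcyl_subset_of_length_lt h₁ h₂ hlt) le_rfl⟩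
  obtain rfl := (mem_zcyl_iff.mp h₁).1.eq_of_length_eq (mem_zcyl_iff.mp h₂).1 heq
  refine ⟨w₁, F₁ ∪ F₂, ?_, zcyl_union.le⟩
  rw [zcyl_union]
  exact ⟨h₁, h₂⟩

theorem isTopologicalBasis_zcyl :
    TopologicalSpace.IsTopologicalBasis {S : Set (FullShift A) | ∃ w F, S = Zcyl w F} := by
  refine .mk ?_ (Set.eq_univ_of_forall fun x => ⟨Zcyl [] ∅, ⟨[], ∅, rfl⟩, ?_⟩) rfl
  · rintro _ ⟨w₁, F₁, rfl⟩ _ ⟨w₂, F₂, rfl⟩ x ⟨h₁, h₂⟩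
    obtain ⟨w, F, hx, hsub⟩ := exists_zcyl_subset_inter h₁ h₂
    exact ⟨_, ⟨w, F, rfl⟩, hx, hsub⟩
  · exact mem_zcyl_iff.mpr ⟨occursAt_nil x 0, by simp⟩

theorem mem_closure_iff_zcyl {S : Set (FullShift A)} {x : FullShift A} :
    x ∈ closure S ↔ ∀ w F, x ∈ Zcyl w F → (Zcyl w F ∩ S).Nonempty := by
  rw [isTopologicalBasis_zcyl.mem_closure_iff]
  exact ⟨fun h w F => h _ ⟨w, F, rfl⟩, fun h _ ⟨w, F, hS⟩ => hS ▸ h w F⟩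

theorem mem_zcyl_of_finSeq_mem_zcyl {w u : List A} {F : Finset A} {x : FullShift A}
    (hu : finSeq u ∈ Zcyl w F) (hxu : OccursAt x 0 u)
    (hxF : ∀ a ∈ F, x.val u.length ≠ some a) :
    x ∈ Zcyl w F := by
  have hw := (mem_zcyl_iff.mp hu).1
  have hle : w.length ≤ u.length := by
    by_contra hlt
    simpa [finSeq_val_of_length_le le_rfl] using hw u.length (by omega)
  rcases hle.lt_or_eq with hlt | heq
  · refine (mem_zcyl_congr fun t ht => ?_).mp hu
    simpa using (occursAt_finSeq u).val_eq hxu (i := t) (by omega)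
  · obtain rfl := hw.eq_of_length_eq (occursAt_finSeq u) heq
    exact mem_zcyl_iff.mpr ⟨hxu, hxF⟩

theorem emptySeq_mem_of_mem_closure {S : Set (FullShift A)} (h : emptySeq ∈ closure S)
    (hfin : (letters S).Finite) : emptySeq ∈ S := by
  obtain ⟨y, hy, hyS⟩ :=
    mem_closure_iff_zcyl.mp h [] hfin.toFinset (finSeq_nil ▸ finSeq_mem_zcyl _ _)
  rcases hy0 : y.val 0 with _ | a
  · exact eq_emptySeq_iff.mpr hy0 ▸ hyS
  · exact absurd hy0 ((mem_zcyl_iff.mp hy).2 a (hfin.mem_toFinset.mpr ⟨y, hyS, 0, hy0⟩))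

section Closedness

variable {N : ℕ} {Λ : Set (FullShift A)}

theorem finSeq_mem_image_higherBlock_of_mem_closure (hΛ : IsClosed Λ)
    {W : List (Fin (N + 1) → A)} (hW : W ≠ [])
    (h : finSeq W ∈ closure (higherBlock (N + 1) '' Λ)) :
    finSeq W ∈ higherBlock (N + 1) '' Λ := by
  classical
  rw [mem_closure_iff_zcyl] at h
  obtain ⟨_, hx'W, x', -, rfl⟩ := h W ∅ (finSeq_mem_zcyl W ∅)
  obtain ⟨u, -, rfl⟩ := exists_occursAt_of_occursAt_higherBlock (mem_zcyl_iff.mp hx'W).1 hW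
  have hu := blocks_ne_nil_iff.mp hW
  refine ⟨finSeq u, ?_, higherBlock_finSeq N u⟩
  rw [← hΛ.closure_eq, mem_closure_iff_zcyl]
  intro w F hw
  -- forbidding the blocks that continue `u` by a letter of `F`
  obtain ⟨_, hxW, x, hx, rfl⟩ := h _ (F.image (nextBlock u)) (finSeq_mem_zcyl _ _)
  obtain ⟨hxu, hxF⟩ := mem_zcyl_iff.mp hxW
  rw [occursAt_higherBlock_blocks_iff hu] at hxu
  refine ⟨x, mem_zcyl_of_finSeq_mem_zcyl hw hxu fun a ha hxa => ?_, hx⟩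
  have hnext := (occursAt_append_singleton_iff.mpr ⟨hxu, by simpa using hxa⟩).higherBlock
    (M := N + 1)
  rw [blocks_append_singleton _ (by omega), occursAt_append_singleton_iff] at hnext
  exact hxF _ (Finset.mem_image_of_mem _ ha) (by simpa using hnext.2)

theorem mem_image_higherBlock_of_mem_closure (hΛ : IsClosed Λ) {Y : FullShift (Fin (N + 1) → A)}
    (hY : ∀ t, Y.val t ≠ none) (h : Y ∈ closure (higherBlock (N + 1) '' Λ)) :
    Y ∈ higherBlock (N + 1) '' Λ := by
  choose B hB using fun t => Option.ne_none_iff_exists'.mp (hY t)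
  have happrox : ∀ k, ∃ x ∈ Λ, ∀ t < k, (higherBlock (N + 1) x).val t = some (B t) := by
    intro k
    obtain ⟨w, hlen, hw⟩ := exists_occursAt_of_forall_ne_none (x := Y) (n := 0) (L := k)
      fun t _ => hY _
    obtain ⟨_, hxw, x, hx, rfl⟩ :=
      mem_closure_iff_zcyl.mp h w ∅ (mem_zcyl_iff.mpr ⟨hw, by simp⟩)
    refine ⟨x, hx, fun t ht => ?_⟩
    simpa [hB] using (mem_zcyl_iff.mp hxw).1.val_eq hw (i := t) (by omega)
  have hcons : ∀ i j, B i j = B (i + j) 0 := by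
    intro i j
    obtain ⟨x, -, hx⟩ := happrox (i + j + 1)
    have h₁ := higherBlock_val_eq_some_iff.mp (hx i (by omega)) j
    have h₂ := higherBlock_val_eq_some_iff.mp (hx (i + j) (by omega)) 0
    rw [Fin.val_zero, add_zero] at h₂
    exact Option.some_inj.mp (h₁.symm.trans h₂)
  let x₀ : FullShift A := ⟨fun t => some (B t 0), fun _ h => nomatch h⟩
  refine ⟨x₀, ?_, FullShift.ext (funext fun t => ?_)⟩
  · rw [← hΛ.closure_eq, mem_closure_iff_zcyl]
    intro w F hw
    obtain ⟨x, hx, hxB⟩ := happrox (w.length + 1)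
    refine ⟨x, (mem_zcyl_congr fun t ht => ?_).mp hw, hx⟩
    simpa using (higherBlock_val_eq_some_iff.mp (hxB t (by omega)) 0).symm
  · rw [hB, higherBlock_val_eq_some_iff]
    exact fun j => congrArg some (hcons t j).symm

end Closedness

theorem IsShiftSpace.isClosed_image_higherBlock {Λ : Set (FullShift A)} (hΛ : IsShiftSpace Λ)
    (N : ℕ) :
    IsClosed (higherBlock (N + 1) '' Λ) := by
  refine closure_subset_iff_isClosed.mp fun Y hY => ?_
  by_cases hfin : ∃ t, Y.val t = none
  · obtain ⟨t, ht⟩ := hfin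
    obtain ⟨W, rfl⟩ := exists_eq_finSeq ht
    rcases eq_or_ne W [] with rfl | hW
    · rw [finSeq_nil] at hY ⊢
      by_contra hnot
      exact hnot <| emptySeq_mem_of_mem_closure hY <|
        Set.not_infinite.mp (mt (hΛ.emptySeq_mem_image_higherBlock_iff N).mpr hnot)
    · exact finSeq_mem_image_higherBlock_of_mem_closure hΛ.1 hW hY
  · exact mem_image_higherBlock_of_mem_closure hΛ.1 (not_exists.mp hfin) hY

theorem higherBlock_image_isShiftSpace_general {A : Type*}
    (M : ℕ) (hM : 0 < M) (Λ : Set (FullShift A)) (hΛ : IsShiftSpace Λ) :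
    IsShiftSpace (higherBlock M '' Λ) := by
  obtain ⟨N, rfl⟩ : ∃ N, M = N + 1 := ⟨M - 1, by omega⟩
  refine ⟨hΛ.isClosed_image_higherBlock N, ?_, hΛ.emptySeq_mem_image_higherBlock_iff N,
    fun W hW => hΛ.finSeq_mem_image_higherBlock_iff hW⟩
  rintro _ ⟨x, hx, rfl⟩
  exact ⟨shiftMap x, hΛ.2.1 x hx, higherBlock_shiftMap _ x⟩

/-- the image of a shift space under the `M`-th higher block code is
a shift space in `Σ_{A^(M)}`. -/
theorem higherBlock_image_isShiftSpace {A : Type*} [Countable A] [Infinite A]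
    (M : ℕ) (hM : 0 < M) (Λ : Set (FullShift A)) (hΛ : IsShiftSpace Λ) :
    IsShiftSpace (higherBlock M '' Λ) :=
  higherBlock_image_isShiftSpace_general M hM Λ hΛ

end OTW
end
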